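/- For every integer s ≥ 1, the coefficient c(s) := (2s(s+1))/3 + (2/3) Σ_{i=2}^{s+1} C(2(s+1), 2i) (B_{2(s+1-i)} B_{2i}/B_{2(s+1)}) (1 - 2^{1-2i})/(1 - 2^{1-2(s+1)}) has the closed form c(s) = (2/3)[s(s-1) - 1 + (1 - 2^{1-2(s+1)})^{-1}] - (1/18) ((s+1)(2s+1)/(1 - 2^{1-2(s+1)})) (B_{2s}/B_{2(s+1)}). -/

import Mathlib

/-!
Since `B_k(1/2) = (2^{1-k} - 1) B_k`, the sum is, up to its first two terms, the convolution
`∑ C(n, k) B_k(1/2) B_{n-k}` with `n = 2(s+1)`. The generating functions `B = x/(e^x - 1)` and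
`H = x e^{x/2}/(e^x - 1)` of `B_k` and `B_k(1/2)` satisfy `B H = H - x H' - x H / 2`, so the
convolution equals `-(n-1) B_n(1/2) - (n/2) B_{n-1}(1/2)`, and `B_{n-1}(1/2) = 0` for odd `n - 1`.
-/

open Finset PowerSeries

theorem Finset.sum_range_two_mul_add_one_of_odd_eq_zero {M : Type*} [AddCommMonoid M]
    (f : ℕ → M) (hf : ∀ k, Odd k → f k = 0) (n : ℕ) :
    ∑ k ∈ range (2 * n + 1), f k = ∑ i ∈ range (n + 1), f (2 * i) := by
  induction n with
  | zero => simp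
  | succ n ih =>
    rw [show 2 * (n + 1) + 1 = 2 * n + 1 + 1 + 1 by ring, sum_range_succ, sum_range_succ, ih,
      hf _ (odd_two_mul_add_one n), add_zero, sum_range_succ (n := n + 1)]
    rfl

theorem PowerSeries.derivative_rescale {R : Type*} [CommSemiring R] (a : R) (f : R⟦X⟧) :
    d⁄dX R (rescale a f) = C a * rescale a (d⁄dX R f) := by
  ext n
  simp only [coeff_derivative, coeff_rescale, coeff_C_mul, pow_succ]
  ring

theorem two_zpow_one_sub_natCast (k : ℕ) : (2 : ℚ) ^ ((1 : ℤ) - k) = 2 / 2 ^ k := by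
  rw [zpow_sub₀ two_ne_zero, zpow_one, zpow_natCast]

-- `ζ(2k)` is a positive multiple of `|B_{2k}|`.
theorem bernoulli_two_mul_ne_zero {k : ℕ} (hk : k ≠ 0) : bernoulli (2 * k) ≠ 0 := by
  intro h
  have hsum := hasSum_zeta_nat hk
  rw [h, Rat.cast_zero, mul_zero, zero_div] at hsum
  have := le_hasSum hsum 1 fun j _ => by positivity
  norm_num at this

namespace Polynomial

theorem bernoulli_eval_half (k : ℕ) :
    (bernoulli k).eval (2⁻¹ : ℚ) = (2 / (2 : ℚ) ^ k - 1) * _root_.bernoulli k := by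
  have h := bernoulliFun_eval_half k
  rw [bernoulliFun, show (2⁻¹ : ℝ) = algebraMap ℚ ℝ 2⁻¹ by simp, eval_map_algebraMap,
    aeval_algebraMap_apply, coe_aeval_eq_eval, eq_ratCast] at h
  apply Rat.cast_injective (α := ℝ)
  push_cast
  exact h

theorem bernoulli_eval_half_of_odd {k : ℕ} (hk : Odd k) : (bernoulli k).eval (2⁻¹ : ℚ) = 0 := by
  obtain ⟨k, rfl⟩ := hk
  have h := bernoulliFun_eval_half_eq_zero k
  rw [bernoulliFun, show (2⁻¹ : ℝ) = algebraMap ℚ ℝ 2⁻¹ by simp, eval_map_algebraMap,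
    aeval_algebraMap_apply, coe_aeval_eq_eval, eq_ratCast] at h
  exact_mod_cast h

end Polynomial

-- Written in the shape of `Polynomial.bernoulli_generating_function` at `t = 1/2`.
noncomputable def bernoulliHalfPowerSeries : ℚ⟦X⟧ :=
  mk fun n => Polynomial.aeval (2⁻¹ : ℚ) ((1 / n.factorial : ℚ) • Polynomial.bernoulli n)

theorem coeff_bernoulliHalfPowerSeries (n : ℕ) :
    coeff n bernoulliHalfPowerSeries = (Polynomial.bernoulli n).eval 2⁻¹ / n.factorial := by
  simp [bernoulliHalfPowerSeries, div_eq_inv_mul]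

theorem bernoulliPowerSeries_mul_bernoulliHalfPowerSeries :
    bernoulliPowerSeries ℚ * bernoulliHalfPowerSeries =
      bernoulliHalfPowerSeries - X * d⁄dX ℚ bernoulliHalfPowerSeries
        - C (2⁻¹ : ℚ) * X * bernoulliHalfPowerSeries := by
  set B := bernoulliPowerSeries ℚ
  set H := bernoulliHalfPowerSeries
  set E := rescale (2⁻¹ : ℚ) (exp ℚ)
  have hB : B * (exp ℚ - 1) = X := bernoulliPowerSeries_mul_exp_sub_one ℚ
  have hH : H * (exp ℚ - 1) = X * E := Polynomial.bernoulli_generating_function _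
  have hE : d⁄dX ℚ E = C (2⁻¹ : ℚ) * E := by
    rw [derivative_rescale, derivative_exp]
  have hH' : d⁄dX ℚ H * (exp ℚ - 1) + H * exp ℚ = E + X * (C (2⁻¹ : ℚ) * E) := by
    simpa [derivative_exp, hE, add_comm, mul_comm] using congrArg (d⁄dX ℚ) hH
  have hC : C (2⁻¹ : ℚ) * 2 = 1 := by
    rw [show (2 : ℚ⟦X⟧) = C 2 from (map_ofNat C 2).symm, ← map_mul]
    norm_num
  have hA : exp ℚ - 1 ≠ 0 := fun h => by
    simpa [coeff_exp] using congrArg (coeff 1) h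
  refine mul_right_cancel₀ hA (mul_right_cancel₀ hA ?_)
  linear_combination (H * (exp ℚ - 1)) * hB
    + (-(exp ℚ - 1) - X * (exp ℚ - 1) + C (2⁻¹ : ℚ) * X * (exp ℚ - 1)) * hH
    + (X * (exp ℚ - 1)) * hH' + (X ^ 2 * (exp ℚ - 1) * E) * hC

theorem sum_range_choose_mul_bernoulli_eval_half_mul_bernoulli (m : ℕ) :
    ∑ k ∈ range (m + 2),
        ((m + 1).choose k : ℚ) * (Polynomial.bernoulli k).eval 2⁻¹ * bernoulli (m + 1 - k)
      = -m * (Polynomial.bernoulli (m + 1)).eval 2⁻¹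
          - (m + 1) / 2 * (Polynomial.bernoulli m).eval 2⁻¹ := by
  have h := congrArg (coeff (m + 1)) bernoulliPowerSeries_mul_bernoulliHalfPowerSeries
  rw [mul_comm (bernoulliPowerSeries ℚ)] at h
  rw [map_sub, map_sub, mul_assoc (C _), coeff_C_mul, coeff_succ_X_mul, coeff_succ_X_mul,
    coeff_derivative, coeff_mul, Nat.sum_antidiagonal_eq_sum_range_succ_mk] at h
  simp only [coeff_bernoulliHalfPowerSeries, bernoulliPowerSeries, coeff_mk,
    Algebra.algebraMap_self, RingHom.id_apply, Nat.succ_eq_add_one] at h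
  have hchoose : ∀ k ∈ range (m + 2), ((m + 1).choose k : ℚ) =
      (m + 1).factorial / (k.factorial * (m + 1 - k).factorial) := fun k hk =>
    Nat.cast_choose ℚ (Nat.lt_succ_iff.mp (mem_range.mp hk))
  calc _ = (m + 1).factorial * ∑ k ∈ range (m + 2), (Polynomial.bernoulli k).eval 2⁻¹
          / k.factorial * (bernoulli (m + 1 - k) / (m + 1 - k).factorial) := by
        rw [mul_sum]
        refine sum_congr rfl fun k hk => ?_
        rw [hchoose k hk]
        ring
    _ = _ := by
        rw [h, Nat.factorial_succ]
        push_cast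
        field_simp
        ring

theorem sum_Icc_choose_mul_bernoulli_eval_half_mul_bernoulli (s : ℕ) :
    ∑ i ∈ Icc 2 (s + 1),
        ((2 * s + 2).choose (2 * i) : ℚ) * (Polynomial.bernoulli (2 * i)).eval 2⁻¹
          * bernoulli (2 * s + 2 - 2 * i)
      = -(2 * s + 1) * (Polynomial.bernoulli (2 * s + 2)).eval 2⁻¹ - bernoulli (2 * s + 2)
          + (s + 1) * (2 * s + 1) / 12 * bernoulli (2 * s) := by
  have key := sum_range_choose_mul_bernoulli_eval_half_mul_bernoulli (2 * s + 1)
  rw [show 2 * s + 1 + 2 = 2 * (s + 1) + 1 by ring,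
    sum_range_two_mul_add_one_of_odd_eq_zero _ (fun k hk => by
      rw [Polynomial.bernoulli_eval_half_of_odd hk, mul_zero, zero_mul]),
    ← sum_range_add_sum_Ico _ (by omega : 2 ≤ s + 1 + 1), Ico_add_one_right_eq_Icc,
    Polynomial.bernoulli_eval_half_of_odd (odd_two_mul_add_one s)] at key
  have h0 : (Polynomial.bernoulli 0).eval (2⁻¹ : ℚ) = 1 := by simp
  have h2 : (Polynomial.bernoulli 2).eval (2⁻¹ : ℚ) = -1 / 12 := by
    rw [Polynomial.bernoulli_eval_half, bernoulli_two]
    norm_num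
  simp only [sum_range_succ, sum_range_zero, mul_zero, mul_one, Nat.sub_zero, Nat.choose_zero_right,
    h0, h2, Nat.cast_choose_two] at key
  rw [show 2 * s + 1 + 1 = 2 * s + 2 from rfl, show 2 * s + 2 - 2 = 2 * s by omega] at key
  push_cast at key
  linear_combination key

theorem stmt15_general (s : ℕ) :
    (2 * s * (s + 1)) / 3
      + (2 / 3) * ∑ i ∈ Finset.Icc 2 (s + 1),
          (Nat.choose (2 * (s + 1)) (2 * i) : ℚ)
            * (bernoulli (2 * (s + 1 - i)) * bernoulli (2 * i) / bernoulli (2 * (s + 1)))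
            * ((1 - (2 : ℚ) ^ ((1 : ℤ) - 2 * i)) / (1 - (2 : ℚ) ^ ((1 : ℤ) - 2 * (s + 1))))
    = (2 / 3) * ((s : ℚ) * (s - 1) - 1 + (1 - (2 : ℚ) ^ ((1 : ℤ) - 2 * (s + 1)))⁻¹)
      - (1 / 18) * (((s : ℚ) + 1) * (2 * s + 1) / (1 - (2 : ℚ) ^ ((1 : ℤ) - 2 * (s + 1))))
          * (bernoulli (2 * s) / bernoulli (2 * (s + 1))) := by
  have hB : bernoulli (2 * s + 2) ≠ 0 := bernoulli_two_mul_ne_zero s.succ_ne_zero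
  have hD : 1 - (2 : ℚ) / 2 ^ (2 * s + 2) ≠ 0 := by
    have : (2 : ℚ) < 2 ^ (2 * s + 2) := calc
      (2 : ℚ) < 2 ^ 2 := by norm_num
      _ ≤ 2 ^ (2 * s + 2) := pow_le_pow_right₀ (by norm_num) (by omega)
    exact (sub_pos.mpr ((div_lt_one (by positivity)).mpr this)).ne'
  have hterm : ∀ i ∈ Icc 2 (s + 1), (Nat.choose (2 * s + 2) (2 * i) : ℚ)
      * (bernoulli (2 * (s + 1 - i)) * bernoulli (2 * i) / bernoulli (2 * s + 2))
      * ((1 - (2 : ℚ) ^ ((1 : ℤ) - 2 * i)) / (1 - 2 / 2 ^ (2 * s + 2)))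
      = -(((2 * s + 2).choose (2 * i) : ℚ) * (Polynomial.bernoulli (2 * i)).eval 2⁻¹
          * bernoulli (2 * s + 2 - 2 * i)) / (bernoulli (2 * s + 2) * (1 - 2 / 2 ^ (2 * s + 2))) := by
    intro i hi
    rw [show 2 * (s + 1 - i) = 2 * s + 2 - 2 * i by omega, Polynomial.bernoulli_eval_half,
      show (1 : ℤ) - 2 * i = 1 - ((2 * i : ℕ) : ℤ) by push_cast; ring, two_zpow_one_sub_natCast]
    field_simp
    ring
  rw [show (1 : ℤ) - 2 * ((s : ℤ) + 1) = 1 - ((2 * s + 2 : ℕ) : ℤ) by push_cast; ring,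
    two_zpow_one_sub_natCast, show 2 * (s + 1) = 2 * s + 2 by ring, sum_congr rfl hterm, ← sum_div,
    sum_neg_distrib, sum_Icc_choose_mul_bernoulli_eval_half_mul_bernoulli,
    Polynomial.bernoulli_eval_half, show (2 : ℚ) / 2 ^ (2 * s + 2) - 1 = -(1 - 2 / 2 ^ (2 * s + 2))
      by ring]
  generalize 1 - (2 : ℚ) / 2 ^ (2 * s + 2) = D at hD ⊢
  field_simp
  ring

theorem stmt15 (s : ℕ) (hs : 1 ≤ s) :
    (2 * s * (s + 1)) / 3
      + (2 / 3) * ∑ i ∈ Finset.Icc 2 (s + 1),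
          (Nat.choose (2 * (s + 1)) (2 * i) : ℚ)
            * (bernoulli (2 * (s + 1 - i)) * bernoulli (2 * i) / bernoulli (2 * (s + 1)))
            * ((1 - (2 : ℚ) ^ ((1 : ℤ) - 2 * i)) / (1 - (2 : ℚ) ^ ((1 : ℤ) - 2 * (s + 1))))
    = (2 / 3) * ((s : ℚ) * (s - 1) - 1 + (1 - (2 : ℚ) ^ ((1 : ℤ) - 2 * (s + 1)))⁻¹)
      - (1 / 18) * (((s : ℚ) + 1) * (2 * s + 1) / (1 - (2 : ℚ) ^ ((1 : ℤ) - 2 * (s + 1))))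
          * (bernoulli (2 * s) / bernoulli (2 * (s + 1))) :=
  stmt15_general s
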